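/- The ideal J is invariant under each of the maps K, K⁻¹, A_L, B_L, A_R, B_R, A*_ℓ, B*_ℓ, A*_r, B*_r. Moreover, the map A_L³B_L − [3]_q A_L²B_L A_L + [3]_q A_L B_L A_L² − B_L A_L³ sends V into J (so the q-Serre relation for A_L, B_L holds on the quotient V/J), and likewise with the pair (A_L, B_L) replaced by (B_L, A_L), by (A_R, B_R), and by (B_R, A_R). -/

import Mathlib

noncomputable section
namespace SqPaper

/-- The two letters: `0 ↦ A`, `1 ↦ B`. -/
abbrev Ltr := Fin 2
def lA : Ltr := 0
def lB : Ltr := 1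

/-- The pairing `⟨ , ⟩` on letters: `⟨A,A⟩=⟨B,B⟩=2`, `⟨A,B⟩=⟨B,A⟩=-2`. -/
def brk (x y : Ltr) : ℤ := if x = y then 2 else -2

variable (F : Type*) [Field F]

/-- The free algebra `V` on the two generators, realized as the monoid algebra of the
free monoid on two letters; the words form the standard basis. -/
abbrev FA := MonoidAlgebra F (FreeMonoid Ltr)

/-- The standard basis vector attached to a word (list of letters). -/
def wd (l : List Ltr) : FA F := MonoidAlgebra.single (FreeMonoid.ofList l) 1

def Agen : FA F := wd F [lA]
def Bgen : FA F := wd F [lB]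

/-- View an element of `V` as a finitely supported function on words. -/
def fsp (v : FA F) : FreeMonoid Ltr →₀ F := v.coeff

/-- The symmetric bilinear form on `V` for which the standard basis of words is orthonormal. -/
def form (u v : FA F) : F := (fsp F u).sum fun w c => c * (fsp F v) w

/-- Extend a function on words to an `F`-linear map on `V`. -/
def mkMap {M : Type*} [AddCommMonoid M] [Module F M] (f : List Ltr → M) :
    FA F →ₗ[F] M :=
  (Finsupp.lsum F fun w => LinearMap.toSpanSingleton F M (f (FreeMonoid.toList w))) ∘ₗ
    (MonoidAlgebra.coeffLinearEquiv F).toLinearMap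

/-- `[3]_q = (q³ - q⁻³)/(q - q⁻¹)`. -/
def tri (q : F) : F := (q ^ 3 - q⁻¹ ^ 3) / (q - q⁻¹)

/-- The q-shuffle product on words. -/
def shufW (q : F) : List Ltr → List Ltr → FA F
  | [], v => wd F v
  | u, [] => wd F u
  | a :: u, b :: v =>
      wd F [a] * shufW q u (b :: v) +
        (q ^ (((a :: u).map (fun x => brk x b)).sum)) • (wd F [b] * shufW q (a :: u) v)
  termination_by u v => u.length + v.length

/-- The q-shuffle product `⋆` on `V`, as a bilinear map. -/
def qshuf (q : F) : FA F →ₗ[F] FA F →ₗ[F] FA F :=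
  mkMap F fun u => mkMap F fun v => shufW F q u v

/-- Iterated `⋆`-product of the letters of a word. -/
def thetaW (q : F) : List Ltr → FA F
  | [] => 1
  | a :: t => qshuf F q (wd F [a]) (thetaW q t)

/-- `θ : V → V`, the algebra homomorphism from the free algebra to the q-shuffle algebra
with `θ(A) = A`, `θ(B) = B`. -/
def theta (q : F) : FA F →ₗ[F] FA F := mkMap F fun l => thetaW F q l

/-- `A_L`, left multiplication by `A` in the free algebra. -/
def AL : FA F →ₗ[F] FA F := LinearMap.mulLeft F (Agen F)
def BL : FA F →ₗ[F] FA F := LinearMap.mulLeft F (Bgen F)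
def AR : FA F →ₗ[F] FA F := LinearMap.mulRight F (Agen F)
def BR : FA F →ₗ[F] FA F := LinearMap.mulRight F (Bgen F)

/-- `X*_L` (for the letter `x`): deletes the letter `x` from the front of a word. -/
def delL (x : Ltr) : FA F →ₗ[F] FA F :=
  mkMap F fun l => if l.head? = some x then wd F l.tail else 0

/-- `X*_R` (for the letter `x`): deletes the letter `x` from the end of a word. -/
def delR (x : Ltr) : FA F →ₗ[F] FA F :=
  mkMap F fun l => if l.getLast? = some x then wd F l.dropLast else 0

/-- `X_ℓ`: left q-shuffle multiplication by the letter `x`. -/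
def shL (q : F) (x : Ltr) : FA F →ₗ[F] FA F := qshuf F q (wd F [x])

/-- `X_r`: right q-shuffle multiplication by the letter `x`. -/
def shR (q : F) (x : Ltr) : FA F →ₗ[F] FA F := (qshuf F q).flip (wd F [x])

/-- `X*_ℓ`: the weighted deletion map, deleting an occurrence of the letter `x`
with weight `q^{⟨v₁,x⟩+⋯+⟨v_{i-1},x⟩}`. -/
def lowL (q : F) (x : Ltr) : FA F →ₗ[F] FA F :=
  mkMap F fun l =>
    ∑ i ∈ Finset.range l.length,
      if l[i]? = some x then
        (q ^ (((l.take i).map (fun y => brk y x)).sum)) • wd F (l.eraseIdx i)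
      else 0

/-- `X*_r`: the weighted deletion map, deleting an occurrence of the letter `x`
with weight `q^{⟨vₙ,x⟩+⋯+⟨v_{i+1},x⟩}`. -/
def lowR (q : F) (x : Ltr) : FA F →ₗ[F] FA F :=
  mkMap F fun l =>
    ∑ i ∈ Finset.range l.length,
      if l[i]? = some x then
        (q ^ (((l.drop (i + 1)).map (fun y => brk y x)).sum)) • wd F (l.eraseIdx i)
      else 0

/-- `K`, the algebra automorphism of the free algebra `V` with `K(A) = q²A`, `K(B) = q⁻²B`;
on a word `v = v₁⋯vₙ` it acts as `K(v) = v·q^{⟨v₁,A⟩+⋯+⟨vₙ,A⟩}`. -/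
def Kop (q : F) : FA F →ₗ[F] FA F :=
  mkMap F fun l => (q ^ ((l.map (fun y => brk y lA)).sum)) • wd F l

/-- `K⁻¹`; on a word `v = v₁⋯vₙ` it acts as `K⁻¹(v) = v·q^{⟨v₁,B⟩+⋯+⟨vₙ,B⟩}`. -/
def Kinv (q : F) : FA F →ₗ[F] FA F :=
  mkMap F fun l => (q ^ ((l.map (fun y => brk y lB)).sum)) • wd F l

/-- `T`, the automorphism of the free algebra swapping `A` and `B`. -/
def Top : FA F →ₗ[F] FA F :=
  mkMap F fun l => wd F (l.map (fun x => if x = lA then lB else lA))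

/-- `Â = Q(A_L − K B_R)` and `B̂ = Q(B_L − K⁻¹ A_R)` where `Q = 1 - q²`. -/
def hatOp (q : F) (a : Ltr) : FA F →ₗ[F] FA F :=
  if a = lA then (1 - q ^ 2) • (AL F - Kop F q ∘ₗ BR F)
  else (1 - q ^ 2) • (BL F - Kinv F q ∘ₗ AR F)

def phiW (q : F) : List Ltr → FA F
  | [] => 1
  | a :: t => hatOp F q a (phiW q t)

/-- The map `φ`: `φ(1) = 1` and `φ(v₁⋯vₙ) = v̂₁v̂₂⋯v̂ₙ(1)`. -/
def phi (q : F) : FA F →ₗ[F] FA F := mkMap F fun l => phiW F q l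

/-- `ψ = K B_R A*_L + K⁻¹ A_R B*_L`. -/
def psi (q : F) : FA F →ₗ[F] FA F :=
  Kop F q ∘ₗ BR F ∘ₗ delL F lA + Kinv F q ∘ₗ AR F ∘ₗ delL F lB

/-- `V_n`, the span of the words of length `n`. -/
def Vn (n : ℕ) : Submodule F (FA F) :=
  Submodule.span F { x | ∃ l : List Ltr, l.length = n ∧ x = wd F l }

/-- `J⁺ = A³B − [3]_q A²BA + [3]_q ABA² − BA³`. -/
def Jp (q : F) : FA F :=
  Agen F ^ 3 * Bgen F - tri F q • (Agen F ^ 2 * Bgen F * Agen F)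
    + tri F q • (Agen F * Bgen F * Agen F ^ 2) - Bgen F * Agen F ^ 3

/-- `J⁻ = B³A − [3]_q B²AB + [3]_q BAB² − AB³`. -/
def Jm (q : F) : FA F :=
  Bgen F ^ 3 * Agen F - tri F q • (Bgen F ^ 2 * Agen F * Bgen F)
    + tri F q • (Bgen F * Agen F * Bgen F ^ 2) - Agen F * Bgen F ^ 3

/-- `J`, the two-sided ideal of the free algebra generated by `J⁺` and `J⁻`
(realized as the `F`-span of the elements `a·J^±·b`). -/
def Jsub (q : F) : Submodule F (FA F) :=
  Submodule.span F { x | ∃ a b : FA F, x = a * Jp F q * b ∨ x = a * Jm F q * b }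

/-- `U`, the subalgebra of the q-shuffle algebra `(V,⋆)` generated by `A` and `B`,
realized as the span of all `⋆`-products of the letters. -/
def Usub (q : F) : Submodule F (FA F) :=
  Submodule.span F (Set.range fun l : List Ltr => thetaW F q l)

/-- A `□_q`-module structure on an `F`-vector space `M`: four operators
`x₀, x₁, x₂, x₃` (indices mod 4) satisfying the q-Weyl and q-Serre relations. -/
structure SqAct (q : F) (M : Type*) [AddCommGroup M] [Module F M] where
  x : ZMod 4 → Module.End F M
  weyl : ∀ i : ZMod 4,
    q • (x i * x (i + 1)) - q⁻¹ • (x (i + 1) * x i) = (q - q⁻¹) • (1 : Module.End F M)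
  serre : ∀ i : ZMod 4,
    x i ^ 3 * x (i + 2) - tri F q • (x i ^ 2 * x (i + 2) * x i)
      + tri F q • (x i * x (i + 2) * x i ^ 2) - x (i + 2) * x i ^ 3 = 0

variable {F} {q : F} {M : Type*} [AddCommGroup M] [Module F M]

/-- A `□_q`-module `M` is generated by `ξ` if no proper submodule
(subspace invariant under all the `xᵢ`) contains `ξ`. -/
def SqAct.Gen (S : SqAct F q M) (ξ : M) : Prop :=
  ∀ W : Submodule F M, (∀ i : ZMod 4, ∀ m ∈ W, S.x i m ∈ W) → ξ ∈ W → W = ⊤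

/-- `W_n`: the span of the vectors `u₁u₂⋯uₙ·ξ` with each `uᵢ ∈ {x₀, x₂}`. -/
def SqAct.Wn (S : SqAct F q M) (ξ : M) (n : ℕ) : Submodule F M :=
  Submodule.span F
    { m | ∃ l : List (ZMod 4), l.length = n ∧ (∀ i ∈ l, i = 0 ∨ i = 2) ∧
        m = l.foldr (fun i acc => S.x i acc) ξ }

/-!
`J` is spanned by the products `a J^± b`, so left and right multiplications preserve it.
`K^{±1}` are algebra automorphisms, and `J^±` are eigenvectors of them since all four words
of `J^±` are rearrangements of one another. The maps `X*_ℓ`, `X*_r` are twisted derivations,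
`X*_ℓ(uv) = X*_ℓ(u) v + K^{±1}(u) X*_ℓ(v)` and `X*_r(uv) = X*_r(u) K^{±1}(v) + u X*_r(v)`,
and they kill `J^±` because `[3]_q = q² + 1 + q⁻²`; hence they preserve `J` as well.
Finally the q-Serre operator in `A_L, B_L` is left multiplication by `J^±`, and the one in
`A_R, B_R` is right multiplication by `-J^±`.
-/

lemma wd_mul (l m : List Ltr) : wd F l * wd F m = wd F (l ++ m) := by
  simp only [wd, MonoidAlgebra.single_mul_single, one_mul]
  rfl

lemma mkMap_wd {M : Type*} [AddCommMonoid M] [Module F M] (f : List Ltr → M) (l : List Ltr) :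
    mkMap F f (wd F l) = f l := by
  change Finsupp.lsum F (fun w => LinearMap.toSpanSingleton F M (f (FreeMonoid.toList w)))
    (Finsupp.single (FreeMonoid.ofList l) 1) = f l
  rw [Finsupp.lsum_single, LinearMap.toSpanSingleton_apply, one_smul, FreeMonoid.toList_ofList]

lemma linearMap_ext_wd {M : Type*} [AddCommMonoid M] [Module F M] {T S : FA F →ₗ[F] M}
    (h : ∀ l, T (wd F l) = S (wd F l)) : T = S := by
  refine MonoidAlgebra.lhom_ext' fun a => LinearMap.ext fun b => ?_
  have hsingle : (MonoidAlgebra.single a b : FA F) = b • wd F a.toList := by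
    rw [wd, MonoidAlgebra.smul_single', mul_one, FreeMonoid.ofList_toList]
  simp only [LinearMap.comp_apply, MonoidAlgebra.lsingle_apply, hsingle, map_smul, h]

lemma linearMap_ext_wd₂ {T S : FA F →ₗ[F] FA F →ₗ[F] FA F}
    (h : ∀ l m, T (wd F l) (wd F m) = S (wd F l) (wd F m)) : T = S :=
  linearMap_ext_wd fun l => linearMap_ext_wd fun m => h l m

abbrev weight (x : Ltr) (l : List Ltr) : ℤ := (l.map (fun y => brk y x)).sum

lemma weight_append (x : Ltr) (l m : List Ltr) : weight x (l ++ m) = weight x l + weight x m := by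
  simp [weight]

lemma weight_perm {l m : List Ltr} (h : l.Perm m) (x : Ltr) : weight x l = weight x m :=
  (h.map _).sum_eq

/-- `K` and `K⁻¹` are definitionally `scale q lA` and `scale q lB`. -/
def scale (q : F) (x : Ltr) : FA F →ₗ[F] FA F := mkMap F fun l => (q ^ weight x l) • wd F l

lemma scale_wd (x : Ltr) (l : List Ltr) : scale q x (wd F l) = (q ^ weight x l) • wd F l :=
  mkMap_wd _ _

lemma scale_mul (hq : q ≠ 0) (x : Ltr) (u v : FA F) :
    scale q x (u * v) = scale q x u * scale q x v := by
  -- Both sides are bilinear in `(u, v)`, so it suffices to compare them on pairs of words.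
  have key : (LinearMap.mul F (FA F)).compr₂ (scale q x)
      = (LinearMap.mul F (FA F)).compl₁₂ (scale q x) (scale q x) := by
    refine linearMap_ext_wd₂ fun l m => ?_
    simp only [LinearMap.compr₂_apply, LinearMap.compl₁₂_apply, LinearMap.mul_apply']
    rw [wd_mul, scale_wd, scale_wd, scale_wd, smul_mul_smul_comm, wd_mul, weight_append,
      zpow_add₀ hq]
  simpa using LinearMap.congr_fun₂ key u v

lemma lowL_wd (x : Ltr) (l : List Ltr) :
    lowL F q x (wd F l) =
      ∑ i ∈ Finset.range l.length,
        if l[i]? = some x then (q ^ weight x (l.take i)) • wd F (l.eraseIdx i) else 0 :=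
  mkMap_wd _ _

lemma lowR_wd (x : Ltr) (l : List Ltr) :
    lowR F q x (wd F l) =
      ∑ i ∈ Finset.range l.length,
        if l[i]? = some x then (q ^ weight x (l.drop (i + 1))) • wd F (l.eraseIdx i) else 0 :=
  mkMap_wd _ _

lemma lowL_mul (hq : q ≠ 0) (x : Ltr) (u v : FA F) :
    lowL F q x (u * v) = lowL F q x u * v + scale q x u * lowL F q x v := by
  have key : (LinearMap.mul F (FA F)).compr₂ (lowL F q x)
      = (LinearMap.mul F (FA F)).compl₁₂ (lowL F q x) LinearMap.id
        + (LinearMap.mul F (FA F)).compl₁₂ (scale q x) (lowL F q x) := by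
    refine linearMap_ext_wd₂ fun l m => ?_
    simp only [LinearMap.compr₂_apply, LinearMap.compl₁₂_apply, LinearMap.mul_apply',
      LinearMap.add_apply, LinearMap.id_apply]
    rw [wd_mul, lowL_wd, lowL_wd, lowL_wd, scale_wd, List.length_append, Finset.sum_range_add]
    congr 1
    · rw [Finset.sum_mul]
      refine Finset.sum_congr rfl fun i hi => ?_
      rw [Finset.mem_range] at hi
      rw [List.getElem?_append_left hi, List.take_append_of_le_length hi.le,
        List.eraseIdx_append_of_lt_length hi]
      split
      · rw [smul_mul_assoc, wd_mul]
      · rw [zero_mul]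
    · rw [Finset.mul_sum]
      refine Finset.sum_congr rfl fun j _ => ?_
      rw [List.getElem?_append_right (Nat.le_add_right _ _), Nat.add_sub_cancel_left,
        List.take_append, List.eraseIdx_append_of_length_le (Nat.le_add_right _ _),
        Nat.add_sub_cancel_left]
      split
      · rw [List.take_of_length_le (Nat.le_add_right _ _), weight_append, zpow_add₀ hq,
          ← wd_mul, mul_smul, smul_mul_assoc, mul_smul_comm]
      · rw [mul_zero]
  simpa using LinearMap.congr_fun₂ key u v

lemma lowR_mul (hq : q ≠ 0) (x : Ltr) (u v : FA F) :
    lowR F q x (u * v) = lowR F q x u * scale q x v + u * lowR F q x v := by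
  have key : (LinearMap.mul F (FA F)).compr₂ (lowR F q x)
      = (LinearMap.mul F (FA F)).compl₁₂ (lowR F q x) (scale q x)
        + (LinearMap.mul F (FA F)).compl₁₂ LinearMap.id (lowR F q x) := by
    refine linearMap_ext_wd₂ fun l m => ?_
    simp only [LinearMap.compr₂_apply, LinearMap.compl₁₂_apply, LinearMap.mul_apply',
      LinearMap.add_apply, LinearMap.id_apply]
    rw [wd_mul, lowR_wd, lowR_wd, lowR_wd, scale_wd, List.length_append, Finset.sum_range_add]
    congr 1
    · rw [mul_smul_comm, Finset.sum_mul, Finset.smul_sum]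
      refine Finset.sum_congr rfl fun i hi => ?_
      rw [Finset.mem_range] at hi
      rw [List.getElem?_append_left hi, List.drop_append_of_le_length (Nat.succ_le_of_lt hi),
        List.eraseIdx_append_of_lt_length hi]
      split
      · rw [weight_append, zpow_add₀ hq, smul_mul_assoc, smul_smul, ← wd_mul,
          mul_comm (q ^ _), mul_smul]
      · rw [zero_mul, smul_zero]
    · rw [Finset.mul_sum]
      refine Finset.sum_congr rfl fun j _ => ?_
      rw [List.getElem?_append_right (Nat.le_add_right _ _), Nat.add_sub_cancel_left,
        show l.length + j + 1 = l.length + (j + 1) by omega, List.drop_append,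
        List.eraseIdx_append_of_length_le (Nat.le_add_right _ _), Nat.add_sub_cancel_left]
      split
      · rw [List.drop_of_length_le (Nat.le_add_right _ _), List.nil_append,
          Nat.add_sub_cancel_left, mul_smul_comm, wd_mul]
      · rw [mul_zero]
  simpa using LinearMap.congr_fun₂ key u v

lemma ltr_eq_or_eq_of_ne {x y : Ltr} (hxy : x ≠ y) (z : Ltr) : z = x ∨ z = y := by
  revert x y z
  decide

def serreWord (t : F) (x y : Ltr) : FA F :=
  wd F [x, x, x, y] - t • wd F [x, x, y, x] + t • wd F [x, y, x, x] - wd F [y, x, x, x]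

lemma Jp_eq_serreWord : Jp F q = serreWord (tri F q) lA lB := by
  simp [Jp, serreWord, Agen, Bgen, pow_succ, wd_mul]

lemma Jm_eq_serreWord : Jm F q = serreWord (tri F q) lB lA := by
  simp [Jm, serreWord, Agen, Bgen, pow_succ, wd_mul]

lemma tri_eq (hq : q ≠ 0) (hq2 : q ^ 2 ≠ 1) : tri F q = q ^ 2 + 1 + q⁻¹ ^ 2 := by
  have : q - q⁻¹ ≠ 0 := by
    rw [sub_ne_zero]
    contrapose! hq2
    rw [sq]
    nth_rw 1 [hq2]
    exact inv_mul_cancel₀ hq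
  rw [tri, div_eq_iff this]
  field_simp
  ring

lemma scale_serreWord (t : F) (x y z : Ltr) :
    scale q z (serreWord t x y) = q ^ weight z [x, x, x, y] • serreWord t x y := by
  have p₁ : [x, x, y, x].Perm [x, x, x, y] := .cons x (.cons x (.swap x y []))
  have p₂ : [x, y, x, x].Perm [x, x, x, y] := (List.Perm.cons x (.swap x y [x])).trans p₁
  have p₃ : [y, x, x, x].Perm [x, x, x, y] := (List.Perm.swap x y [x, x]).trans p₂
  simp only [serreWord, map_sub, map_add, map_smul, scale_wd, weight_perm p₁, weight_perm p₂,
    weight_perm p₃]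
  module

lemma lowL_serreWord (hq : q ≠ 0) {x y : Ltr} (hxy : x ≠ y) (z : Ltr) :
    lowL F q z (serreWord (q ^ 2 + 1 + q⁻¹ ^ 2) x y) = 0 := by
  have hyx := hxy.symm
  rcases ltr_eq_or_eq_of_ne hxy z with rfl | rfl <;>
  · simp only [serreWord, map_sub, map_add, map_smul, lowL_wd, weight, brk, hxy, hyx, ↓reduceIte,
      List.length_cons, List.length_nil, Finset.sum_range_succ, Finset.range_one,
      Finset.sum_singleton, getElem?_pos, List.getElem_cons_zero, List.getElem_cons_succ,
      Option.some.injEq, List.take_succ_cons, List.take_zero, List.map_take, List.map_cons,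
      List.map_nil, List.sum_cons, List.sum_nil, List.eraseIdx_cons_succ, List.eraseIdx_zero,
      List.tail_cons, Int.reduceNeg, Int.reduceAdd, Nat.reduceAdd, Nat.reduceLT, zero_add,
      add_zero, zpow_neg, zpow_ofNat, inv_pow, pow_zero, one_smul, smul_add]
    match_scalars <;> field_simp <;> ring

lemma lowR_serreWord (hq : q ≠ 0) {x y : Ltr} (hxy : x ≠ y) (z : Ltr) :
    lowR F q z (serreWord (q ^ 2 + 1 + q⁻¹ ^ 2) x y) = 0 := by
  have hyx := hxy.symm
  rcases ltr_eq_or_eq_of_ne hxy z with rfl | rfl <;>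
  · simp only [serreWord, map_sub, map_add, map_smul, lowR_wd, weight, brk, hxy, hyx, ↓reduceIte,
      List.length_cons, List.length_nil, Finset.sum_range_succ, Finset.range_one,
      Finset.sum_singleton, getElem?_pos, List.getElem_cons_zero, List.getElem_cons_succ,
      Option.some.injEq, List.drop_succ_cons, List.drop_zero, List.drop_nil, List.map_drop,
      List.map_cons, List.map_nil, List.sum_cons, List.sum_nil, List.eraseIdx_cons_succ, List.eraseIdx_zero,
      List.tail_cons, Int.reduceNeg, Int.reduceAdd, Nat.reduceAdd, Nat.reduceLT, zero_add,
      add_zero, zpow_neg, zpow_ofNat, inv_pow, pow_zero, one_smul, smul_add]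
    match_scalars <;> field_simp <;> ring

lemma mul_mul_mem_Jsub {P : FA F} (hP : P = Jp F q ∨ P = Jm F q) (a b : FA F) :
    a * P * b ∈ Jsub F q := by
  rcases hP with rfl | rfl
  exacts [Submodule.subset_span ⟨a, b, Or.inl rfl⟩, Submodule.subset_span ⟨a, b, Or.inr rfl⟩]

lemma mapsTo_Jsub (T : FA F →ₗ[F] FA F)
    (h : ∀ P : FA F, (P = Jp F q ∨ P = Jm F q) → ∀ a b : FA F, T (a * P * b) ∈ Jsub F q) :
    ∀ v ∈ Jsub F q, T v ∈ Jsub F q := by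
  intro v hv
  induction hv using Submodule.span_induction with
  | mem y hy =>
    obtain ⟨a, b, rfl | rfl⟩ := hy
    exacts [h _ (Or.inl rfl) a b, h _ (Or.inr rfl) a b]
  | zero => simp
  | add u w _ _ hu hw => simpa using add_mem hu hw
  | smul c u _ hu => simpa using Submodule.smul_mem _ c hu

lemma mul_left_mem_Jsub (a : FA F) : ∀ v ∈ Jsub F q, a * v ∈ Jsub F q :=
  mapsTo_Jsub (LinearMap.mulLeft F a) fun _ hP b c => by
    simpa only [LinearMap.mulLeft_apply, ← mul_assoc] using mul_mul_mem_Jsub hP (a * b) c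

lemma mul_right_mem_Jsub (a : FA F) : ∀ v ∈ Jsub F q, v * a ∈ Jsub F q :=
  mapsTo_Jsub (LinearMap.mulRight F a) fun _ hP b c => by
    simpa only [LinearMap.mulRight_apply, mul_assoc] using mul_mul_mem_Jsub hP b (c * a)

lemma Jp_mem_Jsub : Jp F q ∈ Jsub F q := by
  simpa using mul_mul_mem_Jsub (Or.inl rfl) (1 : FA F) 1

lemma Jm_mem_Jsub : Jm F q ∈ Jsub F q := by
  simpa using mul_mul_mem_Jsub (Or.inr rfl) (1 : FA F) 1

lemma exists_eq_serreWord {P : FA F} (hP : P = Jp F q ∨ P = Jm F q) :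
    ∃ x y : Ltr, x ≠ y ∧ P = serreWord (tri F q) x y := by
  rcases hP with rfl | rfl
  exacts [⟨lA, lB, by decide, Jp_eq_serreWord⟩, ⟨lB, lA, by decide, Jm_eq_serreWord⟩]

lemma scale_mapsTo_Jsub (hq : q ≠ 0) (z : Ltr) : ∀ v ∈ Jsub F q, scale q z v ∈ Jsub F q :=
  mapsTo_Jsub _ fun P hP a b => by
    obtain ⟨x, y, -, rfl⟩ := exists_eq_serreWord hP
    rw [scale_mul hq, scale_mul hq, scale_serreWord, mul_smul_comm, smul_mul_assoc]
    exact Submodule.smul_mem _ _ (mul_mul_mem_Jsub hP _ _)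

lemma lowL_mapsTo_Jsub (hq : q ≠ 0) (hq2 : q ^ 2 ≠ 1) (z : Ltr) :
    ∀ v ∈ Jsub F q, lowL F q z v ∈ Jsub F q :=
  mapsTo_Jsub _ fun P hP a b => by
    obtain ⟨x, y, hxy, rfl⟩ := exists_eq_serreWord hP
    rw [lowL_mul hq, lowL_mul hq, tri_eq hq hq2, lowL_serreWord hq hxy, mul_zero, add_zero,
      scale_mul hq, scale_serreWord, mul_smul_comm, smul_mul_assoc, ← tri_eq hq hq2]
    exact add_mem (mul_mul_mem_Jsub hP _ _) (Submodule.smul_mem _ _ (mul_mul_mem_Jsub hP _ _))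

lemma lowR_mapsTo_Jsub (hq : q ≠ 0) (hq2 : q ^ 2 ≠ 1) (z : Ltr) :
    ∀ v ∈ Jsub F q, lowR F q z v ∈ Jsub F q :=
  mapsTo_Jsub _ fun P hP a b => by
    obtain ⟨x, y, hxy, rfl⟩ := exists_eq_serreWord hP
    rw [lowR_mul hq, lowR_mul hq, tri_eq hq hq2, lowR_serreWord hq hxy, mul_zero, add_zero,
      scale_serreWord, mul_smul_comm, smul_mul_assoc, ← tri_eq hq hq2]
    exact add_mem (Submodule.smul_mem _ _ (mul_mul_mem_Jsub hP _ _)) (mul_mul_mem_Jsub hP _ _)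

lemma qSerre_AL_BL_apply (v : FA F) :
    (AL F ∘ₗ AL F ∘ₗ AL F ∘ₗ BL F - tri F q • (AL F ∘ₗ AL F ∘ₗ BL F ∘ₗ AL F)
      + tri F q • (AL F ∘ₗ BL F ∘ₗ AL F ∘ₗ AL F) - BL F ∘ₗ AL F ∘ₗ AL F ∘ₗ AL F) v
      = Jp F q * v := by
  simp [AL, BL, Jp, sub_mul, add_mul, mul_assoc, pow_succ]

lemma qSerre_BL_AL_apply (v : FA F) :
    (BL F ∘ₗ BL F ∘ₗ BL F ∘ₗ AL F - tri F q • (BL F ∘ₗ BL F ∘ₗ AL F ∘ₗ BL F)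
      + tri F q • (BL F ∘ₗ AL F ∘ₗ BL F ∘ₗ BL F) - AL F ∘ₗ BL F ∘ₗ BL F ∘ₗ BL F) v
      = Jm F q * v := by
  simp [AL, BL, Jm, sub_mul, add_mul, mul_assoc, pow_succ]

-- Right multiplications compose in reverse order, and `J⁺` read backwards is `-J⁺`.
lemma qSerre_AR_BR_apply (v : FA F) :
    (AR F ∘ₗ AR F ∘ₗ AR F ∘ₗ BR F - tri F q • (AR F ∘ₗ AR F ∘ₗ BR F ∘ₗ AR F)
      + tri F q • (AR F ∘ₗ BR F ∘ₗ AR F ∘ₗ AR F) - BR F ∘ₗ AR F ∘ₗ AR F ∘ₗ AR F) v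
      = -(v * Jp F q) := by
  simp only [LinearMap.sub_apply, LinearMap.add_apply, LinearMap.smul_apply,
    LinearMap.comp_apply, AR, BR, LinearMap.mulRight_apply, Jp, mul_sub, mul_add, mul_smul_comm,
    mul_assoc, pow_succ, pow_zero, one_mul]
  abel

lemma qSerre_BR_AR_apply (v : FA F) :
    (BR F ∘ₗ BR F ∘ₗ BR F ∘ₗ AR F - tri F q • (BR F ∘ₗ BR F ∘ₗ AR F ∘ₗ BR F)
      + tri F q • (BR F ∘ₗ AR F ∘ₗ BR F ∘ₗ BR F) - AR F ∘ₗ BR F ∘ₗ BR F ∘ₗ BR F) v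
      = -(v * Jm F q) := by
  simp only [LinearMap.sub_apply, LinearMap.add_apply, LinearMap.smul_apply,
    LinearMap.comp_apply, AR, BR, LinearMap.mulRight_apply, Jm, mul_sub, mul_add, mul_smul_comm,
    mul_assoc, pow_succ, pow_zero, one_mul]
  abel

end SqPaper

open SqPaper in
/-- `J` is invariant under `K, K⁻¹, A_L, B_L, A_R, B_R, A*_ℓ, B*_ℓ, A*_r, B*_r`,
and the q-Serre maps for `A_L, B_L, A_R, B_R` send `V` into `J`. -/
theorem J_invariant_and_qSerre (F : Type*) [Field F] (q : F) (hq : q ≠ 0)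
    (hq1 : ∀ k : ℕ, 0 < k → q ^ k ≠ 1) :
    (∀ v ∈ Jsub F q, Kop F q v ∈ Jsub F q) ∧
    (∀ v ∈ Jsub F q, Kinv F q v ∈ Jsub F q) ∧
    (∀ v ∈ Jsub F q, AL F v ∈ Jsub F q) ∧
    (∀ v ∈ Jsub F q, BL F v ∈ Jsub F q) ∧
    (∀ v ∈ Jsub F q, AR F v ∈ Jsub F q) ∧
    (∀ v ∈ Jsub F q, BR F v ∈ Jsub F q) ∧
    (∀ v ∈ Jsub F q, lowL F q lA v ∈ Jsub F q) ∧
    (∀ v ∈ Jsub F q, lowL F q lB v ∈ Jsub F q) ∧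
    (∀ v ∈ Jsub F q, lowR F q lA v ∈ Jsub F q) ∧
    (∀ v ∈ Jsub F q, lowR F q lB v ∈ Jsub F q) ∧
    (∀ v : FA F,
      (AL F ∘ₗ AL F ∘ₗ AL F ∘ₗ BL F - tri F q • (AL F ∘ₗ AL F ∘ₗ BL F ∘ₗ AL F)
        + tri F q • (AL F ∘ₗ BL F ∘ₗ AL F ∘ₗ AL F) - BL F ∘ₗ AL F ∘ₗ AL F ∘ₗ AL F) v
        ∈ Jsub F q) ∧
    (∀ v : FA F,
      (BL F ∘ₗ BL F ∘ₗ BL F ∘ₗ AL F - tri F q • (BL F ∘ₗ BL F ∘ₗ AL F ∘ₗ BL F)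
        + tri F q • (BL F ∘ₗ AL F ∘ₗ BL F ∘ₗ BL F) - AL F ∘ₗ BL F ∘ₗ BL F ∘ₗ BL F) v
        ∈ Jsub F q) ∧
    (∀ v : FA F,
      (AR F ∘ₗ AR F ∘ₗ AR F ∘ₗ BR F - tri F q • (AR F ∘ₗ AR F ∘ₗ BR F ∘ₗ AR F)
        + tri F q • (AR F ∘ₗ BR F ∘ₗ AR F ∘ₗ AR F) - BR F ∘ₗ AR F ∘ₗ AR F ∘ₗ AR F) v
        ∈ Jsub F q) ∧
    (∀ v : FA F,
      (BR F ∘ₗ BR F ∘ₗ BR F ∘ₗ AR F - tri F q • (BR F ∘ₗ BR F ∘ₗ AR F ∘ₗ BR F)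
        + tri F q • (BR F ∘ₗ AR F ∘ₗ BR F ∘ₗ BR F) - AR F ∘ₗ BR F ∘ₗ BR F ∘ₗ BR F) v
        ∈ Jsub F q) := by
  have hq2 : q ^ 2 ≠ 1 := hq1 2 two_pos
  refine ⟨scale_mapsTo_Jsub hq lA, scale_mapsTo_Jsub hq lB, mul_left_mem_Jsub _,
    mul_left_mem_Jsub _, mul_right_mem_Jsub _, mul_right_mem_Jsub _,
    lowL_mapsTo_Jsub hq hq2 lA, lowL_mapsTo_Jsub hq hq2 lB, lowR_mapsTo_Jsub hq hq2 lA,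
    lowR_mapsTo_Jsub hq hq2 lB, fun v => ?_, fun v => ?_, fun v => ?_, fun v => ?_⟩
  · rw [qSerre_AL_BL_apply]
    exact mul_right_mem_Jsub v _ Jp_mem_Jsub
  · rw [qSerre_BL_AL_apply]
    exact mul_right_mem_Jsub v _ Jm_mem_Jsub
  · rw [qSerre_AR_BR_apply]
    exact neg_mem (mul_left_mem_Jsub v _ Jp_mem_Jsub)
  · rw [qSerre_BR_AR_apply]
    exact neg_mem (mul_left_mem_Jsub v _ Jm_mem_Jsub)
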